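/- arXiv:1210.4367 — 2 statements merged into one kernel-verified Lean document; each statement's English description precedes it below -/
import Mathlib

section
/- If H is a standard component of a standard graph G, then H is an element of at least one standard decomposition of G. -/
/-- A labeled graph on node set `V` with edge set `E` is *standard* if all labels are
non-negative and labels are compatible with the edge relation. -/
def IsStandard {V : Type*} (E : Set (V × V)) (l : V → ℤ) : Prop :=
  (∀ v, 0 ≤ l v) ∧ ∀ e ∈ E, l e.1 ≤ l e.2

/-- A labeling is a *0-1 labeling* if every label is 0 or 1. -/
def IsZeroOne {V : Type*} (l : V → ℤ) : Prop := ∀ v, l v = 0 ∨ l v = 1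

/-- `H` is a *standard component* of `G` (same nodes and edges): `H` is a standard 0-1
graph, `G - H` is standard, and not all labels of `H` are zero. -/
def IsStdComp {V : Type*} (E : Set (V × V)) (G H : V → ℤ) : Prop :=
  IsStandard E H ∧ IsZeroOne H ∧ IsStandard E (G - H) ∧ ∃ v, H v ≠ 0

/-- A *standard decomposition* of `G`: a multiset of standard components of `G`
whose pointwise label sum equals the labeling of `G`. -/
def IsStdDecomp {V : Type*} (E : Set (V × V)) (G : V → ℤ) (D : Multiset (V → ℤ)) : Prop :=
  (∀ H ∈ D, IsStdComp E G H) ∧ D.sum = G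

lemma IsStandard.add {V : Type*} {E : Set (V × V)} {f g : V → ℤ}
    (hf : IsStandard E f) (hg : IsStandard E g) : IsStandard E (f + g) :=
  ⟨fun v => add_nonneg (hf.1 v) (hg.1 v),
   fun e he => add_le_add (hf.2 e he) (hg.2 e he)⟩

lemma IsStandard.zero {V : Type*} (E : Set (V × V)) : IsStandard E (0 : V → ℤ) :=
  ⟨fun _ => le_refl 0, fun _ _ => le_refl 0⟩

lemma std_sum {V : Type*} {E : Set (V × V)} (D : Multiset (V → ℤ))
    (h : ∀ f ∈ D, IsStandard E f) : IsStandard E D.sum := by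
  induction D using Multiset.induction with
  | empty => simpa using IsStandard.zero E
  | cons a s ih =>
    rw [Multiset.sum_cons]
    exact (h a (Multiset.mem_cons_self a s)).add
      (ih fun f hf => h f (Multiset.mem_cons_of_mem hf))

lemma decomp_aux {V : Type*} [Fintype V] (E : Set (V × V)) (n : ℕ) :
    ∀ K : V → ℤ, IsStandard E K → (∑ v, (K v).toNat) = n →
    ∃ D : Multiset (V → ℤ),
      (∀ H' ∈ D, IsStandard E H' ∧ IsZeroOne H' ∧ ∃ v, H' v ≠ 0) ∧ D.sum = K := by
  induction n using Nat.strong_induction_on with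
  | _ n ih =>
    intro K hK hn
    by_cases h0 : ∀ v, K v = 0
    · refine ⟨0, by simp, ?_⟩
      funext v; simp [h0 v]
    · push_neg at h0
      obtain ⟨v0, hv0⟩ := h0
      set H0 : V → ℤ := fun v => if 0 < K v then 1 else 0 with hH0def
      have hH0std : IsStandard E H0 := by
        constructor
        · intro v; by_cases h : 0 < K v <;> simp [hH0def, h]
        · intro e he
          by_cases h : 0 < K e.1
          · have h2 : 0 < K e.2 := lt_of_lt_of_le h (hK.2 e he)
            simp [hH0def, h, h2]
          · simp [hH0def, h]
            split <;> simp
      have hK'std : IsStandard E (K - H0) := by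
        constructor
        · intro v
          by_cases h : 0 < K v
          · simp [hH0def, h]; omega
          · simp [hH0def, h]
            exact hK.1 v
        · intro e he
          have h1 := hK.2 e he
          by_cases h : 0 < K e.1
          · have h2 : 0 < K e.2 := lt_of_lt_of_le h h1
            simp [hH0def, h, h2]; omega
          · have h0 : K e.1 = 0 := le_antisymm (not_lt.1 h) (hK.1 e.1)
            simp [hH0def, h, h0]
            split <;> [omega; exact hK.1 e.2]
      have hlt : (∑ v, ((K - H0) v).toNat) < n := by
        rw [← hn]
        apply Finset.sum_lt_sum
        · intro v _
          by_cases h : 0 < K v <;> simp [hH0def, h] <;> omega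
        · refine ⟨v0, Finset.mem_univ v0, ?_⟩
          have hpos : 0 < K v0 := lt_of_le_of_ne (hK.1 v0) (Ne.symm hv0)
          simp [hH0def, hpos]
      obtain ⟨D, hD, hDsum⟩ := ih _ hlt (K - H0) hK'std rfl
      refine ⟨H0 ::ₘ D, ?_, ?_⟩
      · intro H' hH'
        rcases Multiset.mem_cons.1 hH' with rfl | hH'
        · have hpos : 0 < K v0 := lt_of_le_of_ne (hK.1 v0) (Ne.symm hv0)
          refine ⟨hH0std, fun v => ?_, v0, ?_⟩
          · by_cases h : 0 < K v
            · right; simp [hH0def, h]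
            · left; simp [hH0def, h]
          · simp [hH0def, hpos]
        · exact hD H' hH'
      · rw [Multiset.sum_cons, hDsum]
        funext v; simp

/-- Every standard component of a standard graph belongs to some standard decomposition. -/
theorem stdComp_mem_decomp {V : Type*} [Fintype V] (E : Set (V × V)) (hE : ∀ v, (v, v) ∉ E)
    (G H : V → ℤ) (hG : IsStandard E G) (hH : IsStdComp E G H) :
    ∃ D : Multiset (V → ℤ), IsStdDecomp E G D ∧ H ∈ D := by
  obtain ⟨hHstd, hH01, hGHstd, hHne⟩ := hH
  obtain ⟨D, hD, hDsum⟩ := decomp_aux E (∑ v, ((G - H) v).toNat) (G - H) hGHstd rfl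
  refine ⟨H ::ₘ D, ⟨?_, ?_⟩, Multiset.mem_cons_self H D⟩
  · intro H' hH'
    rcases Multiset.mem_cons.1 hH' with rfl | hH'
    · exact ⟨hHstd, hH01, hGHstd, hHne⟩
    · obtain ⟨hstd, h01, hne⟩ := hD H' hH'
      refine ⟨hstd, h01, ?_, hne⟩
      have hkey : G - H' = H + (D.erase H').sum := by
        have : H' ::ₘ D.erase H' = D := Multiset.cons_erase hH'
        have hsum : H' + (D.erase H').sum = G - H := by
          rw [← Multiset.sum_cons, this, hDsum]
        funext v
        have := congrFun hsum v
        simp only [Pi.add_apply, Pi.sub_apply] at this ⊢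
        linarith
      rw [hkey]
      exact hHstd.add (std_sum _ fun f hf =>
        (hD f (Multiset.mem_of_mem_erase hf)).1)
  · rw [Multiset.sum_cons, hDsum]
    funext v; simp
end

section
/- The standard graph of the Connect Four sum of two finite standard sets equals the sum of their standard graphs: G(Δ₁ + Δ₂) = G(Δ₁) ⊕ G(Δ₂). -/
open Pointwise

/-- A *standard set* in `ℕ^n`: a finite set whose complement `C` satisfies `C + ℕ^n = C`. -/
def IsStdSet {n : ℕ} (S : Set (Fin n → ℕ)) : Prop :=
  S.Finite ∧ Sᶜ + (Set.univ : Set (Fin n → ℕ)) = Sᶜ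

/-- Projection `ℕ^{d+1} → ℕ^d` to the first `d` coordinates. -/
def proj {d : ℕ} (b : Fin (d + 1) → ℕ) : Fin d → ℕ := fun i => b i.castSucc

/-- The *height* of `S ⊆ ℕ^{d+1}` over `γ ∈ ℕ^d`: the cardinality of the fiber of the
projection over `γ`. -/
noncomputable def height {d : ℕ} (S : Set (Fin (d + 1) → ℕ)) (g : Fin d → ℕ) : ℕ :=
  {b ∈ S | proj b = g}.ncard

/-- The *Connect Four sum* of two subsets of `ℕ^{d+1}`. -/
def C4sum {d : ℕ} (S T : Set (Fin (d + 1) → ℕ)) : Set (Fin (d + 1) → ℕ) :=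
  {b | b (Fin.last d) < height S (proj b) + height T (proj b)}

/-- A labeled graph with nodes in `ℕ^d`. -/
structure LGraph (d : ℕ) where
  nodes : Set (Fin d → ℕ)
  edges : Set ((Fin d → ℕ) × (Fin d → ℕ))
  label : (Fin d → ℕ) → ℕ

/-- The *standard graph* of `Δ ⊆ ℕ^{d+1}`: nodes are the projection of `Δ`, edges go from
`γ + e_i` to `γ`, and the label at `γ` is the height of `Δ` over `γ`. -/
noncomputable def SGraph {d : ℕ} (S : Set (Fin (d + 1) → ℕ)) : LGraph d where
  nodes := proj '' S
  edges := {p | p.1 ∈ proj '' S ∧ p.2 ∈ proj '' S ∧ ∃ i : Fin d, p.1 = p.2 + Pi.single i 1}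
  label := height S

/-- Sum of labeled graphs: union of node sets and edge sets, pointwise sum of labels
(a node missing from a graph contributes label 0). -/
def gAdd {d : ℕ} (G H : LGraph d) : LGraph d where
  nodes := G.nodes ∪ H.nodes
  edges := G.edges ∪ H.edges
  label := G.label + H.label

lemma snoc_inj {d : ℕ} (g : Fin d → ℕ) : Function.Injective
    (fun k => (Fin.snoc g k : Fin (d + 1) → ℕ)) := by
  intro a b h
  have := congrFun h (Fin.last d)
  simpa using this

lemma proj_snoc {d : ℕ} (g : Fin d → ℕ) (k : ℕ) :
    proj (Fin.snoc g k : Fin (d + 1) → ℕ) = g := by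
  funext i; simp [proj]

lemma snoc_proj {d : ℕ} (b : Fin (d + 1) → ℕ) :
    (Fin.snoc (proj b) (b (Fin.last d)) : Fin (d + 1) → ℕ) = b := by
  funext i
  refine Fin.lastCases ?_ ?_ i <;> simp [proj]

lemma snoc_add {d : ℕ} (a c : Fin d → ℕ) (b k : ℕ) :
    (Fin.snoc a b + Fin.snoc c k : Fin (d + 1) → ℕ) = Fin.snoc (a + c) (b + k) := by
  funext i
  refine Fin.lastCases ?_ ?_ i <;> simp

lemma std_down {n : ℕ} {S : Set (Fin n → ℕ)} (hS : IsStdSet S)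
    {a b : Fin n → ℕ} (h : a + b ∈ S) : a ∈ S := by
  by_contra ha
  have : a + b ∈ Sᶜ + (Set.univ : Set (Fin n → ℕ)) :=
    Set.add_mem_add ha (Set.mem_univ b)
  rw [hS.2] at this
  exact this h

lemma ncard_downclosed {K : Set ℕ} (hfin : K.Finite)
    (hdc : ∀ ⦃j k : ℕ⦄, j ≤ k → k ∈ K → j ∈ K) : K = Set.Iio K.ncard := by
  ext k
  simp only [Set.mem_Iio]
  constructor
  · intro hk
    have h1 : Set.Iic k ⊆ K := fun j hj => hdc hj hk
    have h2 := Set.ncard_le_ncard h1 hfin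
    have h3 : (Set.Iic k).ncard = k + 1 := by
      rw [← Finset.coe_Iic, Set.ncard_coe_finset, Nat.card_Iic]
    omega
  · intro hk
    by_contra hkK
    have h2 : K ⊆ Set.Iio k := fun j hj =>
      lt_of_not_ge fun h => hkK (hdc h hj)
    have h3 := Set.ncard_le_ncard h2 (Set.finite_Iio k)
    have h4 : (Set.Iio k).ncard = k := by
      rw [← Finset.coe_Iio, Set.ncard_coe_finset, Nat.card_Iio]
    omega

lemma fiber_eq_image {d : ℕ} (S : Set (Fin (d + 1) → ℕ)) (g : Fin d → ℕ) :
    {b ∈ S | proj b = g} =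
      (fun k => (Fin.snoc g k : Fin (d + 1) → ℕ)) '' {k | (Fin.snoc g k : Fin (d + 1) → ℕ) ∈ S} := by
  ext b
  constructor
  · rintro ⟨hb, hpb⟩
    refine ⟨b (Fin.last d), ?_, ?_⟩
    · show (Fin.snoc g (b (Fin.last d)) : Fin (d + 1) → ℕ) ∈ S
      rw [← hpb, snoc_proj]; exact hb
    · show (Fin.snoc g (b (Fin.last d)) : Fin (d + 1) → ℕ) = b
      rw [← hpb]
      exact snoc_proj b
  · rintro ⟨k, hk, rfl⟩
    exact ⟨hk, proj_snoc g k⟩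

lemma mem_std_iff {d : ℕ} {S : Set (Fin (d + 1) → ℕ)} (hS : IsStdSet S)
    (g : Fin d → ℕ) (k : ℕ) :
    (Fin.snoc g k : Fin (d + 1) → ℕ) ∈ S ↔ k < height S g := by
  set K : Set ℕ := {k | (Fin.snoc g k : Fin (d + 1) → ℕ) ∈ S} with hKdef
  have hKfin : K.Finite :=
    hS.1.preimage ((snoc_inj g).injOn)
  have hdc : ∀ ⦃j k : ℕ⦄, j ≤ k → k ∈ K → j ∈ K := by
    intro j k hjk hk
    have : (Fin.snoc g k : Fin (d + 1) → ℕ) =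
        (Fin.snoc g j : Fin (d + 1) → ℕ) + Fin.snoc (0 : Fin d → ℕ) (k - j) := by
      have h5 : j + (k - j) = k := by omega
      rw [snoc_add, add_zero, h5]
    have hk' : (Fin.snoc g k : Fin (d + 1) → ℕ) ∈ S := hk
    rw [this] at hk'
    exact std_down hS hk'
  have hK : K = Set.Iio K.ncard := ncard_downclosed hKfin hdc
  have hh : height S g = K.ncard := by
    rw [height, fiber_eq_image, Set.ncard_image_of_injective _ (snoc_inj g)]
  rw [hh]
  constructor
  · intro h
    have : k ∈ Set.Iio K.ncard := hK ▸ h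
    simpa using this
  · intro h
    have : k ∈ Set.Iio K.ncard := Set.mem_Iio.mpr h
    rw [← hK] at this
    exact this

lemma height_c4 {d : ℕ} (S T : Set (Fin (d + 1) → ℕ)) (g : Fin d → ℕ) :
    height (C4sum S T) g = height S g + height T g := by
  have hfib : {b ∈ C4sum S T | proj b = g} =
      (fun k => (Fin.snoc g k : Fin (d + 1) → ℕ)) '' Set.Iio (height S g + height T g) := by
    ext b
    constructor
    · rintro ⟨hb, hpb⟩
      refine ⟨b (Fin.last d), ?_, ?_⟩
      · simp only [Set.mem_Iio]
        have h2 : b (Fin.last d) < height S (proj b) + height T (proj b) := hb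
        rw [hpb] at h2
        exact h2
      · show (Fin.snoc g (b (Fin.last d)) : Fin (d + 1) → ℕ) = b
        rw [← hpb]
        exact snoc_proj b
    · rintro ⟨k, hk, rfl⟩
      refine ⟨?_, proj_snoc g k⟩
      show (Fin.snoc g k : Fin (d + 1) → ℕ) (Fin.last d) <
        height S (proj (Fin.snoc g k)) + height T (proj (Fin.snoc g k))
      rw [proj_snoc]
      simpa using hk
  rw [height, hfib, Set.ncard_image_of_injective _ (snoc_inj g)]
  rw [← Finset.coe_Iio, Set.ncard_coe_finset, Nat.card_Iio]

lemma mem_proj_iff {d : ℕ} {S : Set (Fin (d + 1) → ℕ)} (hfin : S.Finite)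
    (g : Fin d → ℕ) : g ∈ proj '' S ↔ 0 < height S g := by
  have hfibfin : {b ∈ S | proj b = g}.Finite := hfin.subset (Set.sep_subset _ _)
  rw [height, Set.ncard_pos hfibfin]
  constructor
  · rintro ⟨b, hb, hpb⟩
    exact ⟨b, hb, hpb⟩
  · rintro ⟨b, hb, hpb⟩
    exact ⟨b, hb, hpb⟩

lemma c4_finite {d : ℕ} (S T : Set (Fin (d + 1) → ℕ)) (hS : S.Finite) (hT : T.Finite) :
    (C4sum S T).Finite := by
  have hsub : C4sum S T ⊆ ⋃ g ∈ proj '' S ∪ proj '' T,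
      (fun k => (Fin.snoc g k : Fin (d + 1) → ℕ)) '' Set.Iio (height S g + height T g) := by
    intro b hb
    have hbmem : b (Fin.last d) < height S (proj b) + height T (proj b) := hb
    have hpos : 0 < height S (proj b) + height T (proj b) := by omega
    have hg : proj b ∈ proj '' S ∪ proj '' T := by
      by_cases h : 0 < height S (proj b)
      · exact Or.inl ((mem_proj_iff hS (proj b)).mpr h)
      · right
        exact (mem_proj_iff hT (proj b)).mpr (by omega)
    refine Set.mem_biUnion hg ⟨b (Fin.last d), Set.mem_Iio.mpr hbmem, snoc_proj b⟩
  exact Set.Finite.subset (Set.Finite.biUnion ((hS.image proj).union (hT.image proj))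
    (fun g _ => (Set.finite_Iio _).image _)) hsub

lemma proj_down {d : ℕ} {S : Set (Fin (d + 1) → ℕ)} (hS : IsStdSet S)
    {g : Fin d → ℕ} {i : Fin d} (h : g + Pi.single i 1 ∈ proj '' S) : g ∈ proj '' S := by
  obtain ⟨b, hb, hpb⟩ := h
  have hb' : (Fin.snoc g (b (Fin.last d)) : Fin (d + 1) → ℕ) ∈ S := by
    have heq : b = (Fin.snoc g (b (Fin.last d)) : Fin (d + 1) → ℕ) +
        Fin.snoc (Pi.single i 1) 0 := by
      rw [snoc_add, add_zero, ← hpb, snoc_proj]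
    rw [heq] at hb
    exact std_down hS hb
  exact ⟨_, hb', proj_snoc g _⟩

/-- The standard graph of a Connect Four sum is the sum of the standard graphs. -/
theorem sgraph_c4sum {d : ℕ} (S T : Set (Fin (d + 1) → ℕ))
    (hS : IsStdSet S) (hT : IsStdSet T) :
    SGraph (C4sum S T) = gAdd (SGraph S) (SGraph T) := by
  have hCfin : (C4sum S T).Finite := c4_finite S T hS.1 hT.1
  have hnodes : proj '' (C4sum S T) = proj '' S ∪ proj '' T := by
    ext g
    rw [mem_proj_iff hCfin, height_c4, Set.mem_union, mem_proj_iff hS.1, mem_proj_iff hT.1]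
    omega
  have hlabel : height (C4sum S T) = height S + height T := by
    funext g
    exact height_c4 S T g
  have hedges : {p : (Fin d → ℕ) × (Fin d → ℕ) |
      p.1 ∈ proj '' (C4sum S T) ∧ p.2 ∈ proj '' (C4sum S T) ∧
        ∃ i : Fin d, p.1 = p.2 + Pi.single i 1} =
      {p | p.1 ∈ proj '' S ∧ p.2 ∈ proj '' S ∧ ∃ i : Fin d, p.1 = p.2 + Pi.single i 1} ∪
      {p | p.1 ∈ proj '' T ∧ p.2 ∈ proj '' T ∧ ∃ i : Fin d, p.1 = p.2 + Pi.single i 1} := by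
    ext p
    constructor
    · rintro ⟨h1, h2, i, hi⟩
      rw [hnodes] at h1
      rcases h1 with h1 | h1
      · left
        refine ⟨h1, ?_, i, hi⟩
        rw [hi] at h1
        exact proj_down hS h1
      · right
        refine ⟨h1, ?_, i, hi⟩
        rw [hi] at h1
        exact proj_down hT h1
    · rintro (⟨h1, h2, i, hi⟩ | ⟨h1, h2, i, hi⟩) <;>
        exact ⟨by rw [hnodes]; simp [h1], by rw [hnodes]; simp [h2], i, hi⟩
  show LGraph.mk _ _ _ = LGraph.mk _ _ _
  simp only [LGraph.mk.injEq]
  exact ⟨hnodes, hedges, hlabel⟩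
end
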